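/- (Varberg's Theorem) Let f : [a,b] → ℝ be Riemann integrable on [a,b], and let G : [c,d] → ℝ be absolutely continuous on [c,d] with G([c,d]) ⊂ [a,b]. Suppose there exists a Riemann integrable function g : [c,d] → ℝ such that G'(t) = g(t) for almost every t ∈ [c,d]. Then the function t ↦ f(G(t)) g(t) is Riemann integrable on [c,d] and ∫_{G(c)}^{G(d)} f(x) dx = ∫_c^d f(G(t)) g(t) dt. -/

import Mathlib

noncomputable section

/-- A partition of `[a, b]` given by points `x 0 = a < x 1 < ⋯ < x n = b`. -/
def IsPartition (a b : ℝ) (n : ℕ) (x : ℕ → ℝ) : Prop :=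
  x 0 = a ∧ x n = b ∧ ∀ i < n, x i < x (i + 1)

/-- The lower Darboux sum of `f` associated to the partition points `x 0, …, x n`. -/
noncomputable def lowerSum (f : ℝ → ℝ) (n : ℕ) (x : ℕ → ℝ) : ℝ :=
  ∑ i ∈ Finset.range n, sInf (f '' Set.Icc (x i) (x (i + 1))) * (x (i + 1) - x i)

/-- The upper Darboux sum of `f` associated to the partition points `x 0, …, x n`. -/
noncomputable def upperSum (f : ℝ → ℝ) (n : ℕ) (x : ℕ → ℝ) : ℝ :=
  ∑ i ∈ Finset.range n, sSup (f '' Set.Icc (x i) (x (i + 1))) * (x (i + 1) - x i)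

/-- The lower Darboux integral of `f` over `[a, b]`: the supremum of the lower sums. -/
noncomputable def lowerDarboux (f : ℝ → ℝ) (a b : ℝ) : ℝ :=
  sSup {s : ℝ | ∃ n x, IsPartition a b n x ∧ s = lowerSum f n x}

/-- The upper Darboux integral of `f` over `[a, b]`: the infimum of the upper sums. -/
noncomputable def upperDarboux (f : ℝ → ℝ) (a b : ℝ) : ℝ :=
  sInf {s : ℝ | ∃ n x, IsPartition a b n x ∧ s = upperSum f n x}

/-- `f` is bounded on the set `s`. -/
def BoundedOn (f : ℝ → ℝ) (s : Set ℝ) : Prop := ∃ M : ℝ, ∀ x ∈ s, |f x| ≤ M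

/-- `f` is Riemann integrable on `[a, b]`: it is bounded there and its lower and upper
Darboux integrals coincide. -/
def RiemannIntegrableOn (f : ℝ → ℝ) (a b : ℝ) : Prop :=
  BoundedOn f (Set.Icc a b) ∧ lowerDarboux f a b = upperDarboux f a b

/-- The oriented Riemann integral `∫_u^v f`: for `u ≤ v` it is the (lower) Darboux integral
over `[u, v]` (equal to the upper one when `f` is Riemann integrable, and `0` when `u = v`),
and for `v < u` it is minus the integral over `[v, u]`. -/
noncomputable def riemannIntegral (f : ℝ → ℝ) (u v : ℝ) : ℝ :=
  if u ≤ v then lowerDarboux f u v else -lowerDarboux f v u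

/-- `F` is absolutely continuous on `[a, b]`: for every `ε > 0` there is `δ > 0` such that
for every finite collection of non-overlapping subintervals `[u i, v i]` of `[a, b]` of total
length less than `δ`, the sum `∑ |F (v i) - F (u i)|` is less than `ε`. -/
def AbsolutelyContinuousOn (F : ℝ → ℝ) (a b : ℝ) : Prop :=
  ∀ ε > (0 : ℝ), ∃ δ > (0 : ℝ), ∀ n : ℕ, ∀ u v : ℕ → ℝ,
    (∀ i < n, a ≤ u i ∧ u i ≤ v i ∧ v i ≤ b) →
    (∀ i < n, ∀ j < n, i ≠ j → Disjoint (Set.Ioo (u i) (v i)) (Set.Ioo (u j) (v j))) →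
    (∑ i ∈ Finset.range n, (v i - u i)) < δ →
    (∑ i ∈ Finset.range n, |F (v i) - F (u i)|) < ε

/-!
Everything is reduced to Lebesgue integration. A bounded `f` is Riemann integrable on `[u, v]`
iff it is continuous at almost every point, and then its Darboux integrals equal its Lebesgue
integral. Sufficiency: the lower step functions of the uniform partitions converge to `f` at every
point of continuity, so their integrals, the lower sums, converge by dominated convergence.
Necessity: if upper and lower sums come within `1 / (k + 1)` of each other, the gaps between the
corresponding upper and lower step functions have integrals tending to `0`, so their infimum
vanishes a.e.; at a point that is no partition point, each gap bounds the oscillation of `f`.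

Where `G' t ≠ 0`, `G` is injective near `t` with Lipschitz inverse, so for a null set `N` the set
`{t | G' t ≠ 0, G t ∈ N}` is covered by countably many Lipschitz images of subsets of `N` and is
null. Taking for `N` the discontinuities of `f`, `f ∘ G` is continuous a.e. where `g ≠ 0`, while
where `g = 0` the product `(f ∘ G) * g` tends to `0` since `f` is bounded. Taking for `N` the
points where the primitive `H` of `f` fails to have derivative `f`, the absolutely continuous
function `H ∘ G` (`H` is Lipschitz) has derivative `(f ∘ G) * g` a.e., and the fundamental
theorem of calculus for absolutely continuous functions gives the change of variables.
-/

open Set MeasureTheory Filter Topology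
open scoped NNReal

namespace IsPartition

variable {u v t : ℝ} {n : ℕ} {x : ℕ → ℝ}

theorem strictMonoOn (h : IsPartition u v n x) : StrictMonoOn x (Iic n) :=
  strictMonoOn_Iic_of_lt_succ h.2.2

theorem mem_Icc (h : IsPartition u v n x) {i : ℕ} (hi : i ≤ n) : x i ∈ Icc u v := by
  rw [← h.1, ← h.2.1]
  exact ⟨h.strictMonoOn.monotoneOn (Nat.zero_le n) hi (Nat.zero_le i),
    h.strictMonoOn.monotoneOn hi (le_refl n) hi⟩

theorem le (h : IsPartition u v n x) : u ≤ v :=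
  (h.mem_Icc le_rfl).1.trans (h.mem_Icc le_rfl).2

theorem Icc_subset (h : IsPartition u v n x) {i : ℕ} (hi : i < n) :
    Icc (x i) (x (i + 1)) ⊆ Icc u v :=
  Icc_subset_Icc (h.mem_Icc hi.le).1 (h.mem_Icc hi).2

theorem exists_mem_Ico (h : IsPartition u v n x) (ht : t ∈ Ico u v) :
    ∃ i < n, t ∈ Ico (x i) (x (i + 1)) := by
  classical
  set i := Nat.findGreatest (fun i => x i ≤ t) n
  have hxi : x i ≤ t := Nat.findGreatest_spec (P := fun i => x i ≤ t) (m := 0) (Nat.zero_le n)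
    (by rw [h.1]; exact ht.1)
  have hin : i < n := (Nat.findGreatest_le n).lt_of_ne fun hi => by
    rw [show i = n from hi, h.2.1] at hxi
    exact ht.2.not_ge hxi
  exact ⟨i, hin, hxi, not_le.mp (Nat.findGreatest_is_greatest (Nat.lt_succ_self i) hin)⟩

theorem exists_mem_Ioo (h : IsPartition u v n x) (ht : t ∈ Ioo u v) (hx : t ∉ range x) :
    ∃ i < n, t ∈ Ioo (x i) (x (i + 1)) := by
  obtain ⟨i, hi, hti⟩ := h.exists_mem_Ico (Ioo_subset_Ico_self ht)
  exact ⟨i, hi, hti.1.lt_of_ne fun hxt => hx ⟨i, hxt⟩, hti.2⟩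

end IsPartition

theorem isPartition_const (u : ℝ) : IsPartition u u 0 fun _ => u :=
  ⟨rfl, rfl, fun _ hi => absurd hi (Nat.not_lt_zero _)⟩

theorem exists_isPartition {u v : ℝ} (huv : u ≤ v) : ∃ n x, IsPartition u v n x := by
  rcases huv.eq_or_lt with rfl | hlt
  · exact ⟨0, _, isPartition_const u⟩
  · exact ⟨1, fun i => if i = 0 then u else v, by simp, by simp, by simp [hlt]⟩

section Darboux

variable {u v t M : ℝ} {n : ℕ} {x : ℕ → ℝ} {f : ℝ → ℝ}

theorem bddBelow_image_of_abs_le {s : Set ℝ} (hM : ∀ t ∈ s, |f t| ≤ M) : BddBelow (f '' s) :=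
  ⟨-M, forall_mem_image.2 fun t ht => neg_le_of_abs_le (hM t ht)⟩

theorem abs_sInf_image_le {s : Set ℝ} (hM : ∀ t ∈ s, |f t| ≤ M) (hs : s.Nonempty) :
    |sInf (f '' s)| ≤ M := by
  obtain ⟨t₀, ht₀⟩ := hs
  refine abs_le.2 ⟨le_csInf ⟨f t₀, mem_image_of_mem f ht₀⟩ (forall_mem_image.2 fun t ht =>
    neg_le_of_abs_le (hM t ht)), ?_⟩
  exact (csInf_le (bddBelow_image_of_abs_le hM) (mem_image_of_mem f ht₀)).trans
    (le_of_abs_le (hM t₀ ht₀))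

theorem upperSum_eq_neg_lowerSum : upperSum f n x = -lowerSum (fun t => -f t) n x := by
  simp only [upperSum, lowerSum, ← Finset.sum_neg_distrib, ← neg_mul]
  refine Finset.sum_congr rfl fun i _ => ?_
  rw [show (fun t => -f t) '' Icc (x i) (x (i + 1)) = -(f '' Icc (x i) (x (i + 1))) by
    rw [← image_neg_eq_neg, image_image], Real.sInf_neg, neg_neg]

theorem upperDarboux_eq_neg_lowerDarboux :
    upperDarboux f u v = -lowerDarboux (fun t => -f t) u v := by
  rw [upperDarboux, lowerDarboux, ← Real.sInf_neg]
  congr 1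
  ext s
  simp only [upperSum_eq_neg_lowerSum (f := f), Set.mem_neg, mem_ofPred_eq, neg_eq_iff_eq_neg]

def lowerStep (f : ℝ → ℝ) (n : ℕ) (x : ℕ → ℝ) (t : ℝ) : ℝ :=
  ∑ i ∈ Finset.range n,
    (Ico (x i) (x (i + 1))).indicator (fun _ => sInf (f '' Icc (x i) (x (i + 1)))) t

theorem measurable_lowerStep : Measurable (lowerStep f n x) :=
  Finset.measurable_sum _ fun _ _ => measurable_const.indicator measurableSet_Ico

theorem integrable_lowerStep : Integrable (lowerStep f n x) :=
  integrable_finsetSum _ fun _ _ =>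
    (integrable_indicator_iff measurableSet_Ico).2 (integrableOn_const measure_Ico_lt_top.ne)

theorem integral_lowerStep (h : IsPartition u v n x) :
    ∫ t, lowerStep f n x t = lowerSum f n x := by
  simp only [lowerStep]
  rw [integral_finsetSum _ fun _ _ =>
    (integrable_indicator_iff measurableSet_Ico).2 (integrableOn_const measure_Ico_lt_top.ne)]
  refine Finset.sum_congr rfl fun i hi => ?_
  rw [integral_indicator_const _ measurableSet_Ico, smul_eq_mul, mul_comm,
    Real.volume_real_Ico_of_le (h.2.2 i (Finset.mem_range.1 hi)).le]

theorem IsPartition.lowerStep_eq (h : IsPartition u v n x) {i : ℕ} (hi : i < n)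
    (ht : t ∈ Ico (x i) (x (i + 1))) : lowerStep f n x t = sInf (f '' Icc (x i) (x (i + 1))) := by
  rw [lowerStep, Finset.sum_eq_single_of_mem i (Finset.mem_range.2 hi), indicator_of_mem ht]
  intro j hj hji
  refine indicator_of_notMem (fun htj => ?_) _
  have hmono := h.strictMonoOn.monotoneOn
  rcases hji.lt_or_gt with hlt | hgt
  · exact (htj.2.trans_le (hmono (Nat.succ_le_of_lt (hlt.trans hi)) hi.le hlt)).not_ge ht.1
  · exact (ht.2.trans_le (hmono hi (Finset.mem_range.1 hj).le hgt)).not_ge htj.1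

theorem IsPartition.lowerStep_eq_zero (h : IsPartition u v n x) (ht : t ∉ Ico u v) :
    lowerStep f n x t = 0 :=
  Finset.sum_eq_zero fun _ hi => indicator_of_notMem (fun hti => ht
    ⟨(h.mem_Icc (Finset.mem_range.1 hi).le).1.trans hti.1,
      hti.2.trans_le (h.mem_Icc (Finset.mem_range.1 hi)).2⟩) _

theorem IsPartition.lowerStep_le (hM : ∀ t ∈ Icc u v, |f t| ≤ M) (h : IsPartition u v n x)
    (ht : t ∈ Ico u v) : lowerStep f n x t ≤ f t := by
  obtain ⟨i, hi, hti⟩ := h.exists_mem_Ico ht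
  rw [h.lowerStep_eq hi hti]
  exact csInf_le (bddBelow_image_of_abs_le fun s hs => hM s (h.Icc_subset hi hs))
    (mem_image_of_mem f (Ico_subset_Icc_self hti))

theorem IsPartition.abs_lowerStep_le (hM : ∀ t ∈ Icc u v, |f t| ≤ M) (h : IsPartition u v n x) :
    |lowerStep f n x t| ≤ M := by
  by_cases ht : t ∈ Ico u v
  · obtain ⟨i, hi, hti⟩ := h.exists_mem_Ico ht
    rw [h.lowerStep_eq hi hti]
    exact abs_sInf_image_le (fun s hs => hM s (h.Icc_subset hi hs)) (nonempty_Icc.2 (h.2.2 i hi).le)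
  · rw [h.lowerStep_eq_zero ht, abs_zero]
    exact (abs_nonneg _).trans (hM u ⟨le_rfl, h.le⟩)

theorem IsPartition.eventually_lowerStep_le (hM : ∀ t ∈ Icc u v, |f t| ≤ M)
    (h : IsPartition u v n x) (ht : t ∈ Ioo u v) (hx : t ∉ range x) :
    ∀ᶠ s in 𝓝 t, lowerStep f n x t ≤ f s := by
  obtain ⟨i, hi, hti⟩ := h.exists_mem_Ioo ht hx
  filter_upwards [Ioo_mem_nhds hti.1 hti.2] with s hs
  rw [h.lowerStep_eq hi (Ioo_subset_Ico_self hti)]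
  exact csInf_le (bddBelow_image_of_abs_le fun s hs => hM s (h.Icc_subset hi hs))
    (mem_image_of_mem f (Ioo_subset_Icc_self hs))

end Darboux

section Sufficiency

variable {u v t M : ℝ} {n : ℕ} {x : ℕ → ℝ} {f : ℝ → ℝ}

theorem integrableOn_Icc_of_ae_continuousAt (hM : ∀ t ∈ Icc u v, |f t| ≤ M)
    (hc : ∀ᵐ t, t ∈ Ioo u v → ContinuousAt f t) : IntegrableOn f (Icc u v) := by
  set C := {t | t ∈ Ioo u v ∧ ContinuousAt f t}
  have hC : MeasurableSet C := measurableSet_Ioo.inter (measurableSet_of_continuousAt f)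
  have hCI : C =ᵐ[volume] Icc u v := by
    refine EventuallyEq.trans ?_ Ioo_ae_eq_Icc
    rw [eventuallyEq_set]
    filter_upwards [hc] with t ht
    exact ⟨fun h => h.1, fun h => ⟨h, ht h⟩⟩
  have hmeas : AEStronglyMeasurable f (volume.restrict (Icc u v)) := by
    rw [← Measure.restrict_congr_set hCI]
    exact ContinuousOn.aestronglyMeasurable (fun t ht => ht.2.continuousWithinAt) hC
  exact Integrable.of_bound hmeas M ((ae_restrict_iff' measurableSet_Icc).2 (ae_of_all _ hM))

theorem IsPartition.intervalIntegral_lowerStep (h : IsPartition u v n x) :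
    ∫ t in u..v, lowerStep f n x t = lowerSum f n x := by
  rw [intervalIntegral.integral_of_le h.le, ← integral_Ico_eq_integral_Ioc,
    setIntegral_eq_integral_of_forall_compl_eq_zero fun t ht => h.lowerStep_eq_zero ht,
    integral_lowerStep h]

theorem IsPartition.lowerSum_le_integral (hM : ∀ t ∈ Icc u v, |f t| ≤ M)
    (hf : IntegrableOn f (Icc u v)) (h : IsPartition u v n x) :
    lowerSum f n x ≤ ∫ t in u..v, f t := by
  rw [← h.intervalIntegral_lowerStep]
  exact intervalIntegral.integral_mono_on_of_le_Ioo h.le integrable_lowerStep.intervalIntegrable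
    ((intervalIntegrable_iff_integrableOn_Icc_of_le h.le).2 hf)
    fun t ht => h.lowerStep_le hM (Ioo_subset_Ico_self ht)

theorem IsPartition.le_lowerStep (h : IsPartition u v n x) (ht : t ∈ Ico u v) {δ a : ℝ}
    (hmesh : ∀ i < n, x (i + 1) - x i < δ) (ha : ∀ s ∈ Icc u v, |s - t| < δ → a ≤ f s) :
    a ≤ lowerStep f n x t := by
  obtain ⟨i, hi, hti⟩ := h.exists_mem_Ico ht
  rw [h.lowerStep_eq hi hti]
  refine le_csInf ((nonempty_Icc.2 (h.2.2 i hi).le).image f)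
    (forall_mem_image.2 fun s hs => ha s (h.Icc_subset hi hs) ?_)
  have := hmesh i hi
  rw [abs_lt]
  constructor <;> linarith [hs.1, hs.2, hti.1, hti.2]

def uniformPartition (u v : ℝ) (N i : ℕ) : ℝ := u + i * ((v - u) / N)

theorem uniformPartition_succ_sub (N i : ℕ) :
    uniformPartition u v N (i + 1) - uniformPartition u v N i = (v - u) / N := by
  simp only [uniformPartition, Nat.cast_succ]
  ring

theorem isPartition_uniformPartition (huv : u < v) {N : ℕ} (hN : 0 < N) :
    IsPartition u v N (uniformPartition u v N) := by
  refine ⟨by simp [uniformPartition], ?_, fun i _ => ?_⟩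
  · simp only [uniformPartition]
    field_simp
    ring
  · have := uniformPartition_succ_sub (u := u) (v := v) N i
    have : 0 < (v - u) / N := div_pos (sub_pos.2 huv) (Nat.cast_pos.2 hN)
    linarith

theorem tendsto_lowerStep_uniformPartition (hM : ∀ t ∈ Icc u v, |f t| ≤ M) (huv : u < v)
    (ht : t ∈ Ioo u v) (hct : ContinuousAt f t) :
    Tendsto (fun N : ℕ => lowerStep f (N + 1) (uniformPartition u v (N + 1)) t) atTop
      (𝓝 (f t)) := by
  have hP (N : ℕ) := isPartition_uniformPartition huv N.succ_pos
  refine tendsto_order.2 ⟨fun a ha => ?_, fun a ha => Eventually.of_forall fun N =>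
    ((hP N).lowerStep_le hM (Ioo_subset_Ico_self ht)).trans_lt ha⟩
  obtain ⟨a', haa', ha'⟩ := exists_between ha
  obtain ⟨δ, hδ, hfδ⟩ := Metric.eventually_nhds_iff.1 (hct.eventually (lt_mem_nhds ha'))
  have hmesh : ∀ᶠ N : ℕ in atTop, (v - u) / ((N + 1 : ℕ) : ℝ) < δ :=
    ((tendsto_const_div_atTop_nhds_zero_nat (v - u)).comp (tendsto_add_atTop_nat 1)).eventually
      (gt_mem_nhds hδ)
  filter_upwards [hmesh] with N hN
  refine haa'.trans_le ((hP N).le_lowerStep (δ := δ) (Ioo_subset_Ico_self ht) (fun i _ => ?_)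
    fun s _ hs => (hfδ ?_).le)
  · rwa [uniformPartition_succ_sub]
  · rwa [Real.dist_eq]

theorem tendsto_lowerSum_uniformPartition (hM : ∀ t ∈ Icc u v, |f t| ≤ M)
    (hc : ∀ᵐ t, t ∈ Ioo u v → ContinuousAt f t) (huv : u < v) :
    Tendsto (fun N : ℕ => lowerSum f (N + 1) (uniformPartition u v (N + 1))) atTop
      (𝓝 (∫ t in u..v, f t)) := by
  have hP (N : ℕ) := isPartition_uniformPartition huv N.succ_pos
  simp only [← (hP _).intervalIntegral_lowerStep]
  refine intervalIntegral.tendsto_integral_filter_of_dominated_convergence (fun _ => M)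
    (Eventually.of_forall fun _ => measurable_lowerStep.aestronglyMeasurable)
    (Eventually.of_forall fun N => ae_of_all _ fun _ _ => (hP N).abs_lowerStep_le hM)
    intervalIntegrable_const ?_
  filter_upwards [hc, measure_eq_zero_iff_ae_notMem.1 (measure_singleton v)] with t htc htv ht
  rw [uIoc_of_le huv.le] at ht
  have ht' : t ∈ Ioo u v := ⟨ht.1, ht.2.lt_of_ne htv⟩
  exact tendsto_lowerStep_uniformPartition hM huv ht' (htc ht')

theorem lowerDarboux_eq_integral (hM : ∀ t ∈ Icc u v, |f t| ≤ M)
    (hc : ∀ᵐ t, t ∈ Ioo u v → ContinuousAt f t) (huv : u ≤ v) :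
    lowerDarboux f u v = ∫ t in u..v, f t := by
  have hf := integrableOn_Icc_of_ae_continuousAt hM hc
  have hbdd : BddAbove {s | ∃ n x, IsPartition u v n x ∧ s = lowerSum f n x} :=
    ⟨∫ t in u..v, f t, by rintro _ ⟨n, x, h, rfl⟩; exact h.lowerSum_le_integral hM hf⟩
  obtain ⟨n, x, h⟩ := exists_isPartition huv
  refine le_antisymm (csSup_le ⟨_, n, x, h, rfl⟩ ?_) ?_
  · rintro _ ⟨n, x, h, rfl⟩
    exact h.lowerSum_le_integral hM hf
  rcases huv.eq_or_lt with rfl | hlt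
  · rw [intervalIntegral.integral_same]
    exact le_csSup hbdd ⟨0, _, isPartition_const u, by simp [lowerSum]⟩
  · exact le_of_tendsto' (tendsto_lowerSum_uniformPartition hM hc hlt) fun N =>
      le_csSup hbdd ⟨_, _, isPartition_uniformPartition hlt N.succ_pos, rfl⟩

theorem upperDarboux_eq_integral (hM : ∀ t ∈ Icc u v, |f t| ≤ M)
    (hc : ∀ᵐ t, t ∈ Ioo u v → ContinuousAt f t) (huv : u ≤ v) :
    upperDarboux f u v = ∫ t in u..v, f t := by
  have hM' : ∀ t ∈ Icc u v, |-f t| ≤ M := by simpa only [abs_neg] using hM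
  have hc' : ∀ᵐ t, t ∈ Ioo u v → ContinuousAt (fun s => -f s) t := by
    filter_upwards [hc] with t ht ht' using (ht ht').neg
  rw [upperDarboux_eq_neg_lowerDarboux, lowerDarboux_eq_integral hM' hc' huv,
    intervalIntegral.integral_neg, neg_neg]

theorem riemannIntegrableOn_of_ae_continuousAt (hM : ∀ t ∈ Icc u v, |f t| ≤ M)
    (hc : ∀ᵐ t, t ∈ Ioo u v → ContinuousAt f t) (huv : u ≤ v) : RiemannIntegrableOn f u v :=
  ⟨⟨M, hM⟩, by rw [lowerDarboux_eq_integral hM hc huv, upperDarboux_eq_integral hM hc huv]⟩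

theorem riemannIntegral_eq_intervalIntegral (hM : ∀ t ∈ uIcc u v, |f t| ≤ M)
    (hc : ∀ᵐ t, t ∈ uIoo u v → ContinuousAt f t) :
    riemannIntegral f u v = ∫ t in u..v, f t := by
  unfold riemannIntegral
  split_ifs with huv
  · rw [uIcc_of_le huv] at hM
    rw [uIoo_of_le huv] at hc
    exact lowerDarboux_eq_integral hM hc huv
  · rw [not_le] at huv
    rw [uIcc_of_ge huv.le] at hM
    rw [uIoo_of_ge huv.le] at hc
    rw [lowerDarboux_eq_integral hM hc huv.le, intervalIntegral.integral_symm, neg_neg]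

end Sufficiency

section Necessity

theorem ae_exists_lt_of_tendsto_integral {α : Type*} [MeasurableSpace α] {μ : Measure α}
    {h : ℕ → α → ℝ} (hint : ∀ k, Integrable (h k) μ) (hnn : ∀ k, 0 ≤ h k)
    (hlim : Tendsto (fun k => ∫ a, h k a ∂μ) atTop (𝓝 0)) :
    ∀ᵐ a ∂μ, ∀ ε > 0, ∃ k, h k a < ε := by
  set H := fun a => ⨅ k, h k a
  have hH_nonneg : 0 ≤ H := fun a => le_ciInf fun k => hnn k a
  have hH_le (k : ℕ) : H ≤ h k := fun a => ciInf_le ⟨0, forall_mem_range.2 fun k => hnn k a⟩ k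
  have hH_int : Integrable H μ := by
    refine (hint 0).mono' (AEMeasurable.iInf fun k => (hint k).aemeasurable).aestronglyMeasurable
      (ae_of_all _ fun a => ?_)
    rw [Real.norm_of_nonneg (hH_nonneg a)]
    exact hH_le 0 a
  have hH_zero : H =ᵐ[μ] 0 := by
    refine (integral_eq_zero_iff_of_nonneg hH_nonneg hH_int).1
      (le_antisymm ?_ (integral_nonneg hH_nonneg))
    exact ge_of_tendsto' hlim fun k => integral_mono hH_int (hint k) (hH_le k)
  filter_upwards [hH_zero] with a ha ε hε
  exact exists_lt_of_ciInf_lt (ha.trans_lt hε)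

variable {u v : ℝ} {n : ℕ} {x : ℕ → ℝ} {f : ℝ → ℝ}

theorem RiemannIntegrableOn.exists_upperSum_sub_lowerSum_lt (hf : RiemannIntegrableOn f u v)
    (huv : u ≤ v) {ε : ℝ} (hε : 0 < ε) : ∃ n x m y, IsPartition u v n x ∧
      IsPartition u v m y ∧ upperSum f m y - lowerSum f n x < ε := by
  obtain ⟨n₀, x₀, h₀⟩ := exists_isPartition huv
  have hlower : {s | ∃ n x, IsPartition u v n x ∧ s = lowerSum f n x}.Nonempty :=
    ⟨_, n₀, x₀, h₀, rfl⟩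
  have hupper : {s | ∃ n x, IsPartition u v n x ∧ s = upperSum f n x}.Nonempty :=
    ⟨_, n₀, x₀, h₀, rfl⟩
  obtain ⟨_, ⟨n, x, hx, rfl⟩, hlow⟩ :=
    exists_lt_of_lt_csSup hlower (sub_lt_self (lowerDarboux f u v) (half_pos hε))
  obtain ⟨_, ⟨m, y, hy, rfl⟩, hup⟩ :=
    exists_lt_of_csInf_lt hupper (lt_add_of_pos_right (upperDarboux f u v) (half_pos hε))
  refine ⟨n, x, m, y, hx, hy, ?_⟩
  linarith [hf.2]

theorem IsPartition.eventually_abs_sub_le {m : ℕ} {y : ℕ → ℝ} {M t : ℝ}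
    (hM : ∀ t ∈ Icc u v, |f t| ≤ M) (hx : IsPartition u v n x) (hy : IsPartition u v m y)
    (ht : t ∈ Ioo u v) (htx : t ∉ range x) (hty : t ∉ range y) :
    ∀ᶠ s in 𝓝 t, |f s - f t| ≤ -lowerStep (fun s => -f s) m y t - lowerStep f n x t := by
  have hM' : ∀ t ∈ Icc u v, |-f t| ≤ M := by simpa only [abs_neg] using hM
  have hlow := hx.eventually_lowerStep_le hM ht htx
  have hup := hy.eventually_lowerStep_le hM' ht hty
  have := hlow.self_of_nhds
  have := hup.self_of_nhds
  filter_upwards [hlow, hup] with s hs hs'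
  rw [abs_sub_le_iff]
  constructor <;> linarith

theorem RiemannIntegrableOn.ae_continuousAt (hf : RiemannIntegrableOn f u v) :
    ∀ᵐ t, t ∈ Ioo u v → ContinuousAt f t := by
  obtain ⟨M, hM⟩ := hf.1
  rcases le_or_gt v u with hvu | huv
  · exact ae_of_all _ fun t ht => absurd (ht.1.trans ht.2) hvu.not_gt
  choose n x m y hx hy hgap using fun k : ℕ =>
    hf.exists_upperSum_sub_lowerSum_lt huv.le (Nat.one_div_pos_of_nat (n := k))
  have hM' : ∀ t ∈ Icc u v, |-f t| ≤ M := by simpa only [abs_neg] using hM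
  set osc : ℕ → ℝ → ℝ := fun k t =>
    -lowerStep (fun s => -f s) (m k) (y k) t - lowerStep f (n k) (x k) t
  have hosc_nonneg (k : ℕ) : 0 ≤ osc k := fun t => by
    simp only [osc, Pi.zero_apply]
    by_cases ht : t ∈ Ico u v
    · linarith [(hx k).lowerStep_le hM ht, (hy k).lowerStep_le hM' ht]
    · simp [(hx k).lowerStep_eq_zero ht, (hy k).lowerStep_eq_zero ht]
  have hosc_int (k : ℕ) : Integrable (osc k) := integrable_lowerStep.neg.sub integrable_lowerStep
  have hosc_eq (k : ℕ) : ∫ t, osc k t = upperSum f (m k) (y k) - lowerSum f (n k) (x k) := by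
    simp only [osc]
    rw [integral_sub (f := fun t => -lowerStep (fun s => -f s) (m k) (y k) t)
      integrable_lowerStep.neg integrable_lowerStep, integral_neg,
      integral_lowerStep (hy k), integral_lowerStep (hx k), upperSum_eq_neg_lowerSum]
  have hosc_lim : Tendsto (fun k => ∫ t, osc k t) atTop (𝓝 0) :=
    squeeze_zero (fun k => integral_nonneg (hosc_nonneg k))
      (fun k => (hosc_eq k).trans_le (hgap k).le) tendsto_one_div_add_atTop_nhds_zero_nat
  have hpts : ∀ᵐ t, t ∉ ⋃ k, range (x k) ∪ range (y k) :=
    measure_eq_zero_iff_ae_notMem.1 ((countable_iUnion fun k =>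
      (countable_range _).union (countable_range _)).measure_zero _)
  filter_upwards [ae_exists_lt_of_tendsto_integral hosc_int hosc_nonneg hosc_lim, hpts]
    with t hsmall htx ht
  simp only [mem_iUnion, mem_union, not_exists, not_or] at htx
  refine Metric.tendsto_nhds.2 fun ε hε => ?_
  obtain ⟨k, hk⟩ := hsmall ε hε
  filter_upwards [(hx k).eventually_abs_sub_le hM (hy k) ht (htx k).1 (htx k).2] with s hs
  rw [Real.dist_eq]
  exact hs.trans_lt hk

end Necessity

section ChangeOfVariables

theorem volume_eq_zero_of_abs_sub_le_mul {G : ℝ → ℝ} {S : Set ℝ} {K : ℝ≥0}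
    (hS : ∀ s ∈ S, ∀ t ∈ S, |s - t| ≤ K * |G s - G t|) (hG : volume (G '' S) = 0) :
    volume S = 0 := by
  set h := Function.invFunOn G S
  have hh : ∀ t ∈ S, h (G t) = t := fun t ht => by
    have hex : ∃ s ∈ S, G s = G t := ⟨t, ht, rfl⟩
    have := hS _ (Function.invFunOn_mem hex) t ht
    rw [Function.invFunOn_eq hex, sub_self, abs_zero, mul_zero, abs_nonpos_iff, sub_eq_zero] at this
    exact this
  have hlip : LipschitzOnWith K h (G '' S) := by
    refine LipschitzOnWith.of_dist_le_mul ?_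
    rintro _ ⟨s, hs, rfl⟩ _ ⟨t, ht, rfl⟩
    simpa only [Real.dist_eq, hh s hs, hh t ht] using hS s hs t ht
  have himage := hlip.hausdorffMeasure_image_le zero_le_one
  rw [hausdorffMeasure_real, hG, mul_zero, nonpos_iff_eq_zero] at himage
  exact measure_mono_null (fun t ht => (⟨G t, mem_image_of_mem G ht, hh t ht⟩ : t ∈ h '' (G '' S)))
    himage

theorem HasDerivAt.exists_abs_sub_le_mul {G : ℝ → ℝ} {G' t : ℝ} (hG : HasDerivAt G G' t)
    (hG' : G' ≠ 0) : ∃ C, ∀ᶠ s in 𝓝 t, |s - t| ≤ C * |G s - G t| := by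
  obtain ⟨C, hC⟩ := (HasDerivAtFilter.isTheta_sub hG hG').isBigO_symm.bound
  rw [prod_pure, eventually_map] at hC
  exact ⟨C, by simpa only [Real.norm_eq_abs] using hC⟩

theorem ae_notMem_of_hasDerivAt_ne_zero {G G' : ℝ → ℝ} {N : Set ℝ} (hN : volume N = 0) :
    ∀ᵐ t, HasDerivAt G (G' t) t → G' t ≠ 0 → G t ∉ N := by
  -- `G` has an `(n + 1)`-Lipschitz inverse on each piece `A n k` of the grid of mesh `1 / (n + 1)`
  set A : ℕ → ℤ → Set ℝ := fun n k => {t ∈ Icc ((k : ℝ) / (n + 1)) ((k + 1) / (n + 1)) | G t ∈ N ∧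
    ∀ s ∈ Icc ((k : ℝ) / (n + 1)) ((k + 1) / (n + 1)), |s - t| ≤ (n + 1 : ℝ≥0) * |G s - G t|}
  have hA (n : ℕ) (k : ℤ) : volume (A n k) = 0 :=
    volume_eq_zero_of_abs_sub_le_mul (fun s hs t ht => ht.2.2 s hs.1)
      (measure_mono_null (image_subset_iff.2 fun t ht => ht.2.1) hN)
  have hcover : {t | HasDerivAt G (G' t) t ∧ G' t ≠ 0 ∧ G t ∈ N} ⊆ ⋃ n, ⋃ k, A n k := by
    rintro t ⟨hGt, hG't, htN⟩
    obtain ⟨C, hC⟩ := hGt.exists_abs_sub_le_mul hG't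
    obtain ⟨r, hr, hCr⟩ := Metric.eventually_nhds_iff.1 hC
    obtain ⟨n, hn⟩ := exists_nat_gt (max C (1 / r))
    have hn₀ : (0 : ℝ) < n + 1 := by positivity
    have hnr : 1 / (n + 1 : ℝ) < r := by
      rw [div_lt_iff₀ hn₀]
      have := (le_max_right C (1 / r)).trans_lt hn
      rw [div_lt_iff₀ hr] at this
      nlinarith
    set k := ⌊t * (n + 1)⌋
    have htk : t ∈ Icc ((k : ℝ) / (n + 1)) ((k + 1) / (n + 1)) := by
      rw [mem_Icc, div_le_iff₀ hn₀, le_div_iff₀ hn₀]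
      exact ⟨Int.floor_le _, (Int.lt_floor_add_one _).le⟩
    refine mem_iUnion₂.2 ⟨n, k, htk, htN, fun s hs => ?_⟩
    have hst : |s - t| < r := by
      have : (k + 1 : ℝ) / (n + 1) - k / (n + 1) = 1 / (n + 1) := by ring
      rw [abs_lt]
      constructor <;> linarith [hs.1, hs.2, htk.1, htk.2]
    refine (hCr (by rwa [Real.dist_eq])).trans (mul_le_mul_of_nonneg_right ?_ (abs_nonneg _))
    push_cast
    linarith [le_max_left C (1 / r)]
  rw [ae_iff]
  refine measure_mono_null (fun t ht => ?_) (measure_mono_null hcover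
    (measure_iUnion_null fun n => measure_iUnion_null (hA n)))
  simpa only [mem_ofPred_eq, Classical.not_imp, not_not] using ht

theorem LipschitzOnWith.hasDerivAt_comp_of_hasDerivAt_zero {H G : ℝ → ℝ} {K : ℝ≥0} {s : Set ℝ}
    {t : ℝ} (hH : LipschitzOnWith K H s) (hG : HasDerivAt G 0 t) (hs : ∀ᶠ y in 𝓝 t, G y ∈ s) :
    HasDerivAt (H ∘ G) 0 t := by
  rw [hasDerivAt_iff_isLittleO] at hG ⊢
  simp only [smul_zero, sub_zero, Function.comp_apply] at hG ⊢
  refine (Asymptotics.IsBigO.of_bound K ?_).trans_isLittleO hG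
  filter_upwards [hs] with y hy
  simpa only [Real.norm_eq_abs, ← Real.dist_eq] using hH.dist_le_mul _ hy _ hs.self_of_nhds

theorem LipschitzOnWith.comp_absolutelyContinuousOnInterval {X Y : Type*} [PseudoMetricSpace X]
    [PseudoMetricSpace Y] {H : X → Y} {G : ℝ → X} {K : ℝ≥0} {s : Set X} {a b : ℝ}
    (hH : LipschitzOnWith K H s) (hG : AbsolutelyContinuousOnInterval G a b)
    (hGs : MapsTo G (uIcc a b) s) : AbsolutelyContinuousOnInterval (H ∘ G) a b := by
  have hbound := Filter.Tendsto.const_mul (K : ℝ) (show Tendsto _ _ _ from hG)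
  rw [mul_zero] at hbound
  refine squeeze_zero' (Eventually.of_forall fun _ => Finset.sum_nonneg fun _ _ => dist_nonneg)
    ?_ hbound
  filter_upwards [mem_inf_of_right (mem_principal_self _)] with E hE
  rw [Finset.mul_sum]
  exact Finset.sum_le_sum fun i hi =>
    hH.dist_le_mul _ (hGs (hE.1 i hi).1) _ (hGs (hE.1 i hi).2)

theorem AbsolutelyContinuousOn.absolutelyContinuousOnInterval {F : ℝ → ℝ} {a b : ℝ}
    (hF : AbsolutelyContinuousOn F a b) (hab : a ≤ b) : AbsolutelyContinuousOnInterval F a b := by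
  rw [absolutelyContinuousOnInterval_iff]
  intro ε hε
  obtain ⟨δ, hδ, hFδ⟩ := hF ε hε
  refine ⟨δ, hδ, fun ⟨n, I⟩ hI hlen => ?_⟩
  have hdist (i : ℕ) : |F (max (I i).1 (I i).2) - F (min (I i).1 (I i).2)| =
      dist (F (I i).1) (F (I i).2) := by
    rcases le_total (I i).1 (I i).2 with h | h
    · rw [max_eq_right h, min_eq_left h, Real.dist_eq, abs_sub_comm]
    · rw [max_eq_left h, min_eq_right h, Real.dist_eq]
  simp only [← hdist]
  refine hFδ n (fun i => min (I i).1 (I i).2) (fun i => max (I i).1 (I i).2) (fun i hi => ?_)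
    (fun i hi j hj hij => ?_) ?_
  · have hmem := hI.1 i (Finset.mem_range.2 hi)
    rw [uIcc_of_le hab] at hmem
    exact ⟨le_min hmem.1.1 hmem.2.1, min_le_max, max_le hmem.1.2 hmem.2.2⟩
  · exact (hI.2 (Finset.mem_coe.2 (Finset.mem_range.2 hi)) (Finset.mem_coe.2 (Finset.mem_range.2 hj))
      hij).mono Ioo_subset_Ioc_self Ioo_subset_Ioc_self
  · simpa only [max_sub_min_eq_abs', ← Real.dist_eq] using hlen

theorem MeasureTheory.IntegrableOn.intervalIntegrable_of_mem_Icc {f : ℝ → ℝ} {a b p q : ℝ}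
    (hf : IntegrableOn f (Icc a b)) (hp : p ∈ Icc a b) (hq : q ∈ Icc a b) :
    IntervalIntegrable f volume p q :=
  (hf.mono_set (uIcc_subset_Icc hp hq)).intervalIntegrable

theorem lipschitzOnWith_integral {f : ℝ → ℝ} {a b M : ℝ} (hM : ∀ x ∈ Icc a b, |f x| ≤ M)
    (hf : IntegrableOn f (Icc a b)) :
    LipschitzOnWith M.toNNReal (fun x => ∫ y in a..x, f y) (Icc a b) := by
  refine LipschitzOnWith.of_dist_le_mul fun p hp q hq => ?_
  have ha : a ∈ Icc a b := ⟨le_rfl, hp.1.trans hp.2⟩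
  rw [Real.dist_eq, intervalIntegral.integral_interval_sub_left
    (hf.intervalIntegrable_of_mem_Icc ha hp) (hf.intervalIntegrable_of_mem_Icc ha hq), Real.dist_eq,
    ← Real.norm_eq_abs]
  refine intervalIntegral.norm_integral_le_of_norm_le_const fun y hy => ?_
  exact (hM y (uIcc_subset_Icc hq hp (uIoc_subset_uIcc hy))).trans (Real.le_coe_toNNReal M)

theorem integral_comp_mul_of_absolutelyContinuousOnInterval {f G g : ℝ → ℝ} {a b c d M : ℝ}
    (hcd : c ≤ d) (hM : ∀ x ∈ Icc a b, |f x| ≤ M) (hf : IntegrableOn f (Icc a b))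
    (hG : AbsolutelyContinuousOnInterval G c d) (hmaps : MapsTo G (Icc c d) (Icc a b))
    (hG' : ∀ᵐ t, t ∈ Ioo c d → HasDerivAt G (g t) t) :
    ∫ x in G c..G d, f x = ∫ t in c..d, f (G t) * g t := by
  set H := fun x => ∫ y in a..x, f y
  have hGc := hmaps ⟨le_rfl, hcd⟩
  have hGd := hmaps ⟨hcd, le_rfl⟩
  have hab : a ≤ b := hGc.1.trans hGc.2
  have hH := lipschitzOnWith_integral hM hf
  have hHG : AbsolutelyContinuousOnInterval (H ∘ G) c d :=
    hH.comp_absolutelyContinuousOnInterval hG (by rwa [uIcc_of_le hcd])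
  have hH' : ∀ᵐ x, x ∈ Icc a b → HasDerivAt H (f x) x := by
    filter_upwards [((intervalIntegrable_iff_integrableOn_Icc_of_le hab).2 hf).ae_hasDerivAt_integral]
      with x hx hx'
    exact hx (by rwa [uIcc_of_le hab]) a left_mem_uIcc
  -- where `g t ≠ 0`, the point `G t` avoids the null set on which `H' = f` fails
  have hHG' : ∀ᵐ t, t ∈ Ioo c d → HasDerivAt (H ∘ G) (f (G t) * g t) t := by
    filter_upwards [hG', ae_notMem_of_hasDerivAt_ne_zero (G' := g) (ae_iff.1 hH')]
      with t hGt hN ht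
    replace hGt := hGt ht
    by_cases hg0 : g t = 0
    · rw [hg0, mul_zero]
      exact hH.hasDerivAt_comp_of_hasDerivAt_zero (hg0 ▸ hGt)
        (eventually_of_mem (Icc_mem_nhds ht.1 ht.2) fun y hy => hmaps hy)
    · exact (not_not.1 (hN hGt hg0) (hmaps (Ioo_subset_Icc_self ht))).comp t hGt
  calc ∫ x in G c..G d, f x = H (G d) - H (G c) :=
        (intervalIntegral.integral_interval_sub_left (hf.intervalIntegrable_of_mem_Icc
          ⟨le_rfl, hab⟩ hGd) (hf.intervalIntegrable_of_mem_Icc ⟨le_rfl, hab⟩ hGc)).symm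
    _ = ∫ t in c..d, deriv (H ∘ G) t := hHG.integral_deriv_eq_sub.symm
    _ = ∫ t in c..d, f (G t) * g t := by
      refine intervalIntegral.integral_congr_ae ?_
      filter_upwards [hHG', measure_eq_zero_iff_ae_notMem.1 (measure_singleton d)]
        with t ht htd htcd
      rw [uIoc_of_le hcd] at htcd
      exact (ht ⟨htcd.1, htcd.2.lt_of_ne htd⟩).deriv

theorem ae_continuousAt_comp_mul {f G g : ℝ → ℝ} {a b c d M : ℝ} (hM : ∀ x ∈ Icc a b, |f x| ≤ M)
    (hf : ∀ᵐ x, x ∈ Ioo a b → ContinuousAt f x) (hmaps : MapsTo G (Icc c d) (Icc a b))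
    (hG' : ∀ᵐ t, t ∈ Ioo c d → HasDerivAt G (g t) t) (hg : ∀ᵐ t, t ∈ Ioo c d → ContinuousAt g t) :
    ∀ᵐ t, t ∈ Ioo c d → ContinuousAt (fun t => f (G t) * g t) t := by
  have hN : volume {x | ¬(x ∈ Icc a b → x ∈ Ioo a b ∧ ContinuousAt f x)} = 0 := by
    rw [← ae_iff]
    filter_upwards [hf, measure_eq_zero_iff_ae_notMem.1 (measure_singleton a),
      measure_eq_zero_iff_ae_notMem.1 (measure_singleton b)] with x hx hxa hxb hx'
    have hx'' : x ∈ Ioo a b := ⟨hx'.1.lt_of_ne (Ne.symm hxa), hx'.2.lt_of_ne hxb⟩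
    exact ⟨hx'', hx hx''⟩
  filter_upwards [hG', hg, ae_notMem_of_hasDerivAt_ne_zero (G' := g) hN] with t hGt hgt hNt ht
  by_cases hg0 : g t = 0
  · have hlim : Tendsto (fun s => M * |g s|) (𝓝 t) (𝓝 0) := by
      simpa [hg0] using ((hgt ht).abs.const_mul M).tendsto
    rw [ContinuousAt, hg0, mul_zero]
    refine squeeze_zero_norm' ?_ hlim
    filter_upwards [Icc_mem_nhds ht.1 ht.2] with s hs
    rw [Real.norm_eq_abs, abs_mul]
    exact mul_le_mul_of_nonneg_right (hM _ (hmaps hs)) (abs_nonneg _)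
  · obtain ⟨-, hfGt⟩ := not_not.1 (hNt (hGt ht) hg0) (hmaps (Ioo_subset_Icc_self ht))
    exact (hfGt.comp (hGt ht).continuousAt).mul (hgt ht)

end ChangeOfVariables

theorem varberg_general (a b c d : ℝ) (hcd : c ≤ d) (f G g : ℝ → ℝ)
    (hf : RiemannIntegrableOn f a b)
    (hG : AbsolutelyContinuousOn G c d)
    (hrange : G '' Set.Icc c d ⊆ Set.Icc a b)
    (hg : RiemannIntegrableOn g c d)
    (hG' : ∀ᵐ t ∂MeasureTheory.volume, t ∈ Set.Icc c d →
      HasDerivWithinAt G (g t) (Set.Icc c d) t) :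
    RiemannIntegrableOn (fun t => f (G t) * g t) c d ∧
      riemannIntegral f (G c) (G d) = riemannIntegral (fun t => f (G t) * g t) c d := by
  obtain ⟨Mf, hMf⟩ := hf.1
  obtain ⟨Mg, hMg⟩ := hg.1
  have hmaps : MapsTo G (Icc c d) (Icc a b) := fun t ht => hrange (mem_image_of_mem G ht)
  have hGderiv : ∀ᵐ t, t ∈ Ioo c d → HasDerivAt G (g t) t := by
    filter_upwards [hG'] with t ht ht'
    exact (ht (Ioo_subset_Icc_self ht')).hasDerivAt (Icc_mem_nhds ht'.1 ht'.2)
  have hfc := hf.ae_continuousAt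
  have hφM : ∀ t ∈ Icc c d, |f (G t) * g t| ≤ Mf * Mg := fun t ht => by
    rw [abs_mul]
    exact mul_le_mul (hMf _ (hmaps ht)) (hMg t ht) (abs_nonneg _)
      ((abs_nonneg _).trans (hMf _ (hmaps ht)))
  have hφc := ae_continuousAt_comp_mul hMf hfc hmaps hGderiv hg.ae_continuousAt
  refine ⟨riemannIntegrableOn_of_ae_continuousAt hφM hφc hcd, ?_⟩
  have hGc := hmaps ⟨le_rfl, hcd⟩
  have hGd := hmaps ⟨hcd, le_rfl⟩
  rw [riemannIntegral_eq_intervalIntegral (fun x hx => hMf x (uIcc_subset_Icc hGc hGd hx))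
      (hfc.mono fun x hx hx' => hx (uIoo_subset_Ioo hGc hGd hx')),
    riemannIntegral_eq_intervalIntegral (by rwa [uIcc_of_le hcd]) (by rwa [uIoo_of_le hcd])]
  exact integral_comp_mul_of_absolutelyContinuousOnInterval hcd hMf
    (integrableOn_Icc_of_ae_continuousAt hMf hfc) (hG.absolutelyContinuousOnInterval hcd) hmaps
    hGderiv

/-- **Varberg's theorem.** Let `f` be Riemann integrable on `[a, b]`, let `G` be
absolutely continuous on `[c, d]` with `G([c, d]) ⊆ [a, b]`, and suppose `G' = g` almost
everywhere on `[c, d]` for some Riemann integrable `g` on `[c, d]`. Then `(f ∘ G) · g` is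
Riemann integrable on `[c, d]` and `∫_{G c}^{G d} f(x) dx = ∫_c^d f(G t) g(t) dt`. -/
theorem varberg (a b c d : ℝ) (hab : a ≤ b) (hcd : c ≤ d) (f G g : ℝ → ℝ)
    (hf : RiemannIntegrableOn f a b)
    (hG : AbsolutelyContinuousOn G c d)
    (hrange : G '' Set.Icc c d ⊆ Set.Icc a b)
    (hg : RiemannIntegrableOn g c d)
    (hG' : ∀ᵐ t ∂MeasureTheory.volume, t ∈ Set.Icc c d →
      HasDerivWithinAt G (g t) (Set.Icc c d) t) :
    RiemannIntegrableOn (fun t => f (G t) * g t) c d ∧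
      riemannIntegral f (G c) (G d) = riemannIntegral (fun t => f (G t) * g t) c d :=
  varberg_general a b c d hcd f G g hf hG hrange hg hG'
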